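/- arXiv:1706.05566 — 9 statements merged into one kernel-verified Lean document; each statement's English description precedes it below -/
import Mathlib

section
/- Let a = P(R1=1) and b = P(R0=1) with 0 < a ≤ 1 and 0 ≤ b ≤ 1, and let x = P(R0=0, R1=1) be the cell of a 2x2 joint distribution with these margins. Then the probability of causation PC = x/a satisfies max{0, 1 − b/a} ≤ PC ≤ min{1, (1−b)/a}. -/
theorem stmt_1_general (p00 p01 p10 p11 a b : ℝ)
    (h00 : 0 ≤ p00) (h01 : 0 ≤ p01) (h10 : 0 ≤ p10) (h11 : 0 ≤ p11)
    (hsum : p00 + p01 + p10 + p11 = 1)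
    (ha : p10 + p11 = a) (hb : p01 + p11 = b)
    (ha0 : 0 < a) :
    max 0 (1 - b / a) ≤ p10 / a ∧ p10 / a ≤ min 1 ((1 - b) / a) := by
  -- In cell coordinates: a - b = p10 - p01, a = p10 + p11 and 1 - b = p00 + p10.
  refine ⟨max_le (div_nonneg h10 ha0.le) ?_, le_min ((div_le_one ha0).2 (by linarith)) ?_⟩
  · rw [one_sub_div ha0.ne']
    gcongr
    linarith
  · gcongr
    linarith

/-- General interval bounds for the probability of causation PC = x/a where
x = P(R0=0,R1=1), a = P(R1=1), b = P(R0=1). -/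
theorem stmt_1 (p00 p01 p10 p11 a b : ℝ)
    (h00 : 0 ≤ p00) (h01 : 0 ≤ p01) (h10 : 0 ≤ p10) (h11 : 0 ≤ p11)
    (hsum : p00 + p01 + p10 + p11 = 1)
    (ha : p10 + p11 = a) (hb : p01 + p11 = b)
    (ha0 : 0 < a) (ha1 : a ≤ 1) (hb0 : 0 ≤ b) (hb1 : b ≤ 1) :
    max 0 (1 - b / a) ≤ p10 / a ∧ p10 / a ≤ min 1 ((1 - b) / a) :=
  stmt_1_general p00 p01 p10 p11 a b h00 h01 h10 h11 hsum ha hb ha0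
end

section
/- Under the constraints of a 2x2 joint distribution of (R0,R1) with margins a = P(R1=1) > 0 and b = P(R0=1), if the relative risk RR = a/b > 2 then the probability of causation PC = P(R0=0,R1=1)/a satisfies PC > 1/2. -/
/-- If the relative risk RR = a/b exceeds 2, then the probability of causation
PC = p10/a exceeds 1/2, for every compatible joint distribution of (R0,R1). -/
theorem stmt_2 (p00 p01 p10 p11 a b : ℝ)
    (h00 : 0 ≤ p00) (h01 : 0 ≤ p01) (h10 : 0 ≤ p10) (h11 : 0 ≤ p11)
    (hsum : p00 + p01 + p10 + p11 = 1)
    (ha : p10 + p11 = a) (hb : p01 + p11 = b)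
    (ha0 : 0 < a) (hb0 : 0 < b)
    (hRR : a / b > 2) :
    p10 / a > 1 / 2 := by
  have hab : a > 2 * b := by
    have h := (lt_div_iff₀ hb0).mp hRR
    linarith
  rw [gt_iff_lt, div_lt_div_iff₀ (by norm_num) ha0]
  nlinarith
end

section
/- Under monotonicity (P(R0=1, R1=0) = 0), the probability of causation is exactly determined: PC = 1 − b/a, where a = P(R1=1) > 0 and b = P(R0=1) ≤ a. -/
/-- Under monotonicity (p01 = P(R0=1,R1=0) = 0), PC is exactly 1 − b/a,
and necessarily b ≤ a. -/
theorem stmt_4 (p00 p01 p10 p11 a b : ℝ)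
    (h00 : 0 ≤ p00) (h01 : 0 ≤ p01) (h10 : 0 ≤ p10) (h11 : 0 ≤ p11)
    (hsum : p00 + p01 + p10 + p11 = 1)
    (ha : p10 + p11 = a) (hb : p01 + p11 = b)
    (ha0 : 0 < a)
    (hmono : p01 = 0) :
    p10 = a - b ∧ p10 / a = 1 - b / a ∧ b ≤ a := by
  subst hmono
  refine ⟨by linarith, ?_, by linarith⟩
  field_simp
  linarith
end

section
/- Covariate upper bound: In the same setting, PC ≤ 1 − Γ / Σ_x q(x)·a(x), where Γ = Σ_x q(x)·max{0, a(x) − (1 − b(x))}. -/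
open Finset

/-- Covariate upper bound: PC ≤ 1 − Γ/(Σ q x · a x) with
Γ = Σ q x · max{0, a x − (1 − b x)}. -/
theorem stmt_7 {ι : Type*} [Fintype ι]
    (q a b p00 p01 p10 p11 : ι → ℝ)
    (hq : ∀ x, 0 ≤ q x) (hqsum : ∑ x, q x = 1)
    (ha01 : ∀ x, 0 ≤ a x ∧ a x ≤ 1) (hb01 : ∀ x, 0 ≤ b x ∧ b x ≤ 1)
    (hp : ∀ x, 0 ≤ p00 x ∧ 0 ≤ p01 x ∧ 0 ≤ p10 x ∧ 0 ≤ p11 x)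
    (hpsum : ∀ x, p00 x + p01 x + p10 x + p11 x = 1)
    (hma : ∀ x, p10 x + p11 x = a x) (hmb : ∀ x, p01 x + p11 x = b x)
    (hpos : 0 < ∑ x, q x * a x) :
    (∑ x, q x * p10 x) / (∑ x, q x * a x) ≤
      1 - (∑ x, q x * max 0 (a x - (1 - b x))) / (∑ x, q x * a x) := by
  have key : ∑ x, q x * p10 x ≤
      (∑ x, q x * a x) - ∑ x, q x * max 0 (a x - (1 - b x)) := by
    rw [← Finset.sum_sub_distrib]
    apply Finset.sum_le_sum
    intro x _
    rw [← mul_sub]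
    apply mul_le_mul_of_nonneg_left _ (hq x)
    rcases le_or_gt (a x - (1 - b x)) 0 with h | h
    · rw [max_eq_left h, sub_zero, ← hma x]
      linarith [(hp x).2.2.2]
    · rw [max_eq_right h.le]
      have := hpsum x
      have := hmb x
      have := (hp x).1
      linarith
  have h1 : (1:ℝ) - (∑ x, q x * max 0 (a x - (1 - b x))) / (∑ x, q x * a x)
      = ((∑ x, q x * a x) - ∑ x, q x * max 0 (a x - (1 - b x))) / (∑ x, q x * a x) := by
    field_simp
  rw [h1]
  exact (div_le_div_iff_of_pos_right hpos).mpr key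
end

section
/- The covariate-informed interval is contained in the marginal interval: with a = Σ_x q(x)a(x) > 0 and b = Σ_x q(x)b(x), one has Δ/a ≥ max{0, 1 − b/a} and 1 − Γ/a ≤ min{1, (1−b)/a}, where Δ = Σ_x q(x)max{0, a(x)−b(x)} and Γ = Σ_x q(x)max{0, a(x)−(1−b(x))}. -/
open Finset

/-- The covariate-informed interval [Δ/a, 1−Γ/a] is contained in the marginal
interval [max{0,1−b/a}, min{1,(1−b)/a}]. -/
theorem stmt_8 {ι : Type*} [Fintype ι]
    (q a b : ι → ℝ)
    (hq : ∀ x, 0 ≤ q x) (hqsum : ∑ x, q x = 1)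
    (ha01 : ∀ x, 0 ≤ a x ∧ a x ≤ 1) (hb01 : ∀ x, 0 ≤ b x ∧ b x ≤ 1)
    (hpos : 0 < ∑ x, q x * a x) :
    (∑ x, q x * max 0 (a x - b x)) / (∑ x, q x * a x) ≥
        max 0 (1 - (∑ x, q x * b x) / (∑ x, q x * a x)) ∧
    1 - (∑ x, q x * max 0 (a x - (1 - b x))) / (∑ x, q x * a x) ≤
        min 1 ((1 - ∑ x, q x * b x) / (∑ x, q x * a x)) := by
  set A := ∑ x, q x * a x with hA
  have hAne : A ≠ 0 := ne_of_gt hpos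
  constructor
  · apply max_le
    · exact div_nonneg (Finset.sum_nonneg fun x _ =>
        mul_nonneg (hq x) (le_max_left _ _)) hpos.le
    · have key : A - ∑ x, q x * b x ≤ ∑ x, q x * max 0 (a x - b x) := by
        rw [hA, ← Finset.sum_sub_distrib]
        apply Finset.sum_le_sum
        intro x _
        rw [← mul_sub]
        exact mul_le_mul_of_nonneg_left (le_max_right _ _) (hq x)
      calc 1 - (∑ x, q x * b x) / A = (A - ∑ x, q x * b x) / A := by
              field_simp
        _ ≤ (∑ x, q x * max 0 (a x - b x)) / A :=
              div_le_div_of_nonneg_right key hpos.le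
  · apply le_min
    · have : 0 ≤ (∑ x, q x * max 0 (a x - (1 - b x))) / A :=
        div_nonneg (Finset.sum_nonneg fun x _ =>
          mul_nonneg (hq x) (le_max_left _ _)) hpos.le
      linarith
    · have key : A - ∑ x, q x * max 0 (a x - (1 - b x)) ≤ 1 - ∑ x, q x * b x := by
        have h1 : A - ∑ x, q x * max 0 (a x - (1 - b x))
            = ∑ x, q x * (a x - max 0 (a x - (1 - b x))) := by
          rw [hA, ← Finset.sum_sub_distrib]
          congr 1; ext x; ring
        have h2 : (1 : ℝ) - ∑ x, q x * b x = ∑ x, q x * (1 - b x) := by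
          simp only [mul_sub, mul_one, Finset.sum_sub_distrib, hqsum]
        rw [h1, h2]
        apply Finset.sum_le_sum
        intro x _
        apply mul_le_mul_of_nonneg_left _ (hq x)
        rcases le_or_gt (a x - (1 - b x)) 0 with h | h
        · rw [max_eq_left h]; linarith
        · rw [max_eq_right h.le]; linarith
      calc 1 - (∑ x, q x * max 0 (a x - (1 - b x))) / A
          = (A - ∑ x, q x * max 0 (a x - (1 - b x))) / A := by field_simp
        _ ≤ (1 - ∑ x, q x * b x) / A := div_le_div_of_nonneg_right key hpos.le
end

section
/- Tian–Pearl lower bound: Suppose the observational joint distribution of (E, R0, R1) satisfies P(R=1) = P(E=1,R1=1) + P(E=0,R0=1), and let b* = P(R0=1) (the experimental control recovery rate) and PC = P(R0=0, R1=1 | E=1, R1=1) with P(E=1,R1=1) > 0. Then PC ≥ max{0, (P(R=1) − b*) / P(E=1, R=1)}. -/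
/-- Tian–Pearl lower bound.  p e r0 r1 is the joint probability of
(E=e, R0=r0, R1=r1); the observed response is R = R_E. -/
theorem stmt_10 (p : Bool → Bool → Bool → ℝ)
    (hnn : ∀ e r0 r1, 0 ≤ p e r0 r1)
    (hsum : ∑ e : Bool, ∑ r0 : Bool, ∑ r1 : Bool, p e r0 r1 = 1)
    (hpos : 0 < p true false true + p true true true) :
    -- PC = P(E=1,R1=1,R0=0)/P(E=1,R1=1)
    p true false true / (p true false true + p true true true) ≥
      max 0
        -- (P(R=1) − P(R0=1)) / P(E=1,R=1)
        (((p true false true + p true true true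
              + p false true false + p false true true)
            - (p false true false + p false true true
              + p true true false + p true true true))
          / (p true false true + p true true true)) := by
  rw [ge_iff_le, max_le_iff]
  refine ⟨div_nonneg (hnn _ _ _) hpos.le, (div_le_div_iff_of_pos_right hpos).mpr ?_⟩
  have := hnn true true false
  linarith
end

section
/- Tian–Pearl upper bound: In the same setting, PC ≤ min{1, (1 − P(R0=1) − P(E=0, R=0)) / P(E=1, R=1)}. -/
/-- Tian–Pearl upper bound.  p e r0 r1 is the joint probability of
(E=e, R0=r0, R1=r1); observed response R = R_E. -/
theorem stmt_11 (p : Bool → Bool → Bool → ℝ)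
    (hnn : ∀ e r0 r1, 0 ≤ p e r0 r1)
    (hsum : ∑ e : Bool, ∑ r0 : Bool, ∑ r1 : Bool, p e r0 r1 = 1)
    (hpos : 0 < p true false true + p true true true) :
    p true false true / (p true false true + p true true true) ≤
      min 1
        -- (1 − P(R0=1) − P(E=0,R=0)) / P(E=1,R=1)
        ((1 - (p false true false + p false true true
              + p true true false + p true true true)
            - (p false false false + p false false true))
          / (p true false true + p true true true)) := by
  simp only [Fintype.sum_bool] at hsum
  apply le_min
  · rw [div_le_one hpos]
    nlinarith [hnn true true true]
  · gcongr
    nlinarith [hnn true false false]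
end

section
/- Complete mediator upper bound improves on the marginal bound: with c_e = P(M=1|E=e) and d_m = P(R=1|M=m) all in [0,1], a = d1·c1 + d0·(1−c1), b = d1·c0 + d0·(1−c0), a > 0, the quantity U = (1/a)·min{ (1−c0)(1−d0)+(1−d1)(1−c1), c1(1−d0)+(1−d1)c0, (1−c0)d1 + d0(1−c1), c1·d1 + d0·c0 } satisfies U ≤ min{1, (1−b)/a}. -/
/-- The complete-mediator upper bound U never exceeds the marginal upper
bound min{1, (1−b)/a}. -/
theorem stmt_14 (c1 c0 d1 d0 a b : ℝ)
    (hc1 : 0 ≤ c1 ∧ c1 ≤ 1) (hc0 : 0 ≤ c0 ∧ c0 ≤ 1)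
    (hd1 : 0 ≤ d1 ∧ d1 ≤ 1) (hd0 : 0 ≤ d0 ∧ d0 ≤ 1)
    (ha : a = d1 * c1 + d0 * (1 - c1)) (hb : b = d1 * c0 + d0 * (1 - c0))
    (hapos : 0 < a) :
    (1 / a) * min (min ((1 - c0) * (1 - d0) + (1 - d1) * (1 - c1))
                       (c1 * (1 - d0) + (1 - d1) * c0))
                  (min ((1 - c0) * d1 + d0 * (1 - c1))
                       (c1 * d1 + d0 * c0))
      ≤ min 1 ((1 - b) / a) := by
  obtain ⟨hc1l, hc1u⟩ := hc1
  obtain ⟨hc0l, hc0u⟩ := hc0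
  obtain ⟨hd1l, hd1u⟩ := hd1
  obtain ⟨hd0l, hd0u⟩ := hd0
  set m := min (min ((1 - c0) * (1 - d0) + (1 - d1) * (1 - c1))
                       (c1 * (1 - d0) + (1 - d1) * c0))
                  (min ((1 - c0) * d1 + d0 * (1 - c1))
                       (c1 * d1 + d0 * c0)) with hm
  have hma : m ≤ a := by
    rcases le_total (c0 + c1) 1 with h | h
    · have h4 : m ≤ c1 * d1 + d0 * c0 := le_trans (min_le_right _ _) (min_le_right _ _)
      nlinarith
    · have h3 : m ≤ (1 - c0) * d1 + d0 * (1 - c1) :=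
        le_trans (min_le_right _ _) (min_le_left _ _)
      nlinarith
  have hmb : m ≤ 1 - b := by
    rcases le_total (c0 + c1) 1 with h | h
    · have h2 : m ≤ c1 * (1 - d0) + (1 - d1) * c0 :=
        le_trans (min_le_left _ _) (min_le_right _ _)
      nlinarith
    · have h1 : m ≤ (1 - c0) * (1 - d0) + (1 - d1) * (1 - c1) :=
        le_trans (min_le_left _ _) (min_le_left _ _)
      nlinarith
  rw [le_min_iff]
  constructor
  · rw [one_div, inv_mul_le_iff₀ hapos, mul_one]
    exact hma
  · rw [one_div, inv_mul_eq_div]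
    exact div_le_div_of_nonneg_right hmb hapos.le
end

section
/- Partial mediator: the upper bound from equation (partub) can exceed the marginal upper bound. With P(M=1|E=0)=0.96, P(M=1|E=1)=0.74, P(R=1|E=0,M=0)=0.02, P(R=1|E=0,M=1)=0.33, P(R=1|E=1,M=0)=0.91, P(R=1|E=1,M=1)=0.73, the mediator-based upper bound u satisfies u > min{1,(1−b)/a}, where a = P(R=1|E=1) and b = P(R=1|E=0) are computed by total probability over M. -/
/-- Partial-mediator example where the mediator-based upper bound u exceeds
the marginal upper bound min{1,(1−b)/a}.  r e m = P(R=1|E=e,M=m),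
m0 = P(M=1|E=0), m1 = P(M=1|E=1). -/
theorem stmt_16 (m0 m1 r00 r01 r10 r11 a b u : ℝ)
    (hm0 : m0 = 0.96) (hm1 : m1 = 0.74)
    (hr00 : r00 = 0.02) (hr01 : r01 = 0.33)
    (hr10 : r10 = 0.91) (hr11 : r11 = 0.73)
    (ha : a = r11 * m1 + r10 * (1 - m1))
    (hb : b = r01 * m0 + r00 * (1 - m0))
    (hu : a * u =
        min (1 - r00) r10 * min (1 - m0) (1 - m1)
      + min (1 - r00) r11 * min (1 - m0) m1
      + min (1 - r01) r10 * min m0 (1 - m1)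
      + min (1 - r01) r11 * min m0 m1) :
    u > min 1 ((1 - b) / a) := by
  subst hm0 hm1 hr00 hr01 hr10 hr11 ha hb
  norm_num [min_def] at hu ⊢
  linarith
end
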